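/- For every integer t ≥ 1, the graph K_{t,t} \ tK_2, namely the bipartite graph with vertex parts {x_1,…,x_t} and {y_1,…,y_t} in which x_i is adjacent to y_j if and only if i ≠ j (the complete bipartite graph minus a perfect matching), has z-chromatic number equal to t. -/
import Mathlib


/-- A proper vertex coloring of `G` using exactly the colors `{1, …, k}`:
every vertex gets a color in `{1, …, k}`, adjacent vertices get different
colors, and every color in `{1, …, k}` is used. -/
def IsProperColoring {V : Type*} (G : SimpleGraph V) (k : ℕ) (c : V → ℕ) : Prop :=
  (∀ v, c v ∈ Finset.Icc 1 k) ∧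
  (∀ u v, G.Adj u v → c u ≠ c v) ∧
  (∀ i ∈ Finset.Icc 1 k, ∃ v, c v = i)

/-- A Grundy coloring of `G` using `k` colors: a proper coloring using `k` colors
such that every vertex of color `j` has, for each color `i < j`, a neighbor of color `i`. -/
def IsGrundyColoring {V : Type*} (G : SimpleGraph V) (k : ℕ) (c : V → ℕ) : Prop :=
  IsProperColoring G k c ∧
  ∀ v, ∀ i ∈ Finset.Icc 1 k, i < c v → ∃ w, G.Adj v w ∧ c w = i

/-- In a coloring `c` of `G` with colors `{1, …, k}`, a vertex `v` is color-dominating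
if for every color `j ∈ {1, …, k}` different from the color of `v`, the vertex `v`
has a neighbor of color `j`. -/
def IsCDVertex {V : Type*} (G : SimpleGraph V) (k : ℕ) (c : V → ℕ) (v : V) : Prop :=
  ∀ j ∈ Finset.Icc 1 k, j ≠ c v → ∃ w, G.Adj v w ∧ c w = j

/-- A color-dominating coloring (b-coloring) of `G` using `k` colors: a proper coloring
using `k` colors in which every color class contains a color-dominating vertex. -/
def IsBColoring {V : Type*} (G : SimpleGraph V) (k : ℕ) (c : V → ℕ) : Prop :=
  IsProperColoring G k c ∧
  ∀ i ∈ Finset.Icc 1 k, ∃ v, c v = i ∧ IsCDVertex G k c v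

/-- A z-coloring of `G` using `k` colors: a proper coloring which is simultaneously
a Grundy coloring and a color-dominating coloring, and which admits color-dominating
vertices `u 1, …, u k` with `c (u j) = j` such that `u k` is adjacent to each `u j`, `j ≠ k`. -/
def IsZColoring {V : Type*} (G : SimpleGraph V) (k : ℕ) (c : V → ℕ) : Prop :=
  IsGrundyColoring G k c ∧ IsBColoring G k c ∧
  ∃ u : ℕ → V,
    (∀ j ∈ Finset.Icc 1 k, c (u j) = j ∧ IsCDVertex G k c (u j)) ∧
    (∀ j ∈ Finset.Icc 1 k, j ≠ k → G.Adj (u k) (u j))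

/-- The Grundy number of `G`: the maximum `k` such that `G` admits a Grundy coloring
using `k` colors. -/
noncomputable def grundyNumber {V : Type*} (G : SimpleGraph V) : ℕ :=
  sSup {k | ∃ c : V → ℕ, IsGrundyColoring G k c}

/-- The b-chromatic number of `G`: the maximum `k` such that `G` admits a b-coloring
using `k` colors. -/
noncomputable def bNumber {V : Type*} (G : SimpleGraph V) : ℕ :=
  sSup {k | ∃ c : V → ℕ, IsBColoring G k c}

/-- The z-chromatic number of `G`: the maximum `k` such that `G` admits a z-coloring
using `k` colors. -/
noncomputable def zNumber {V : Type*} (G : SimpleGraph V) : ℕ :=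
  sSup {k | ∃ c : V → ℕ, IsZColoring G k c}

/-- The base relation of `K_{t,t} \ tK_2`: the left vertex `x_i` is related to the right
vertex `y_j` iff `i ≠ j`. -/
def MRel (t : ℕ) : (Fin t ⊕ Fin t) → (Fin t ⊕ Fin t) → Prop
  | Sum.inl i, Sum.inr j => i ≠ j
  | _, _ => False

/-- The graph `K_{t,t} \ tK_2`, the complete bipartite graph minus a perfect matching. -/
def Mgraph (t : ℕ) : SimpleGraph (Fin t ⊕ Fin t) := SimpleGraph.fromRel (MRel t)



@[simp] lemma madj_lr {t : ℕ} (i j : Fin t) :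
    (Mgraph t).Adj (Sum.inl i) (Sum.inr j) ↔ i ≠ j := by
  constructor
  · rintro ⟨-, h | h⟩
    · exact h
    · exact absurd h (by simp [MRel])
  · intro h
    exact ⟨by simp, Or.inl h⟩

@[simp] lemma madj_rl {t : ℕ} (i j : Fin t) :
    (Mgraph t).Adj (Sum.inr j) (Sum.inl i) ↔ i ≠ j := by
  rw [SimpleGraph.adj_comm]; exact madj_lr i j

@[simp] lemma madj_ll {t : ℕ} (i j : Fin t) :
    ¬ (Mgraph t).Adj (Sum.inl i) (Sum.inl j) := by
  rintro ⟨-, h | h⟩ <;> exact (by simpa [MRel] using h)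

@[simp] lemma madj_rr {t : ℕ} (i j : Fin t) :
    ¬ (Mgraph t).Adj (Sum.inr i) (Sum.inr j) := by
  rintro ⟨-, h | h⟩ <;> exact (by simpa [MRel] using h)

lemma card_aux {t k : ℕ} (i : Fin t) (m : ℕ → Fin t)
    (hne : ∀ j ∈ Finset.Icc 1 (k-1), m j ≠ i)
    (hinj : Set.InjOn m (Finset.Icc 1 (k-1))) : k - 1 ≤ t - 1 := by
  have hcard : (Finset.Icc 1 (k-1)).card ≤ (Finset.univ.erase i).card := by
    apply Finset.card_le_card_of_injOn m
    · intro j hj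
      exact Finset.mem_erase.2 ⟨hne j hj, Finset.mem_univ _⟩
    · exact hinj
  rw [Nat.card_Icc, Finset.card_erase_of_mem (Finset.mem_univ _), Finset.card_univ,
    Fintype.card_fin] at hcard
  omega

lemma zcol_le {t k : ℕ} (ht : 1 ≤ t) (c : (Fin t ⊕ Fin t) → ℕ)
    (h : IsZColoring (Mgraph t) k c) : k ≤ t := by
  rcases Nat.lt_or_ge k 2 with hk2 | hk2
  · omega
  by_contra hk
  push_neg at hk
  obtain ⟨-, -, u, hu1, hu2⟩ := h
  have hadj : ∀ j ∈ Finset.Icc 1 (k-1), (Mgraph t).Adj (u k) (u j) := by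
    intro j hj
    rw [Finset.mem_Icc] at hj
    exact hu2 j (Finset.mem_Icc.2 ⟨hj.1, by omega⟩) (by omega)
  have hcol : ∀ j ∈ Finset.Icc 1 (k-1), c (u j) = j := by
    intro j hj
    rw [Finset.mem_Icc] at hj
    exact (hu1 j (Finset.mem_Icc.2 ⟨hj.1, by omega⟩)).1
  set g : ℕ → Fin t := fun j => Sum.elim id id (u j) with hg
  have : k - 1 ≤ t - 1 := by
    rcases huk : u k with i | i
    · have hform : ∀ j ∈ Finset.Icc 1 (k-1), u j = Sum.inr (g j) ∧ g j ≠ i := by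
        intro j hj
        have ha := hadj j hj
        rw [huk] at ha
        rcases hj' : u j with m | m
        · rw [hj'] at ha; exact absurd ha (madj_ll i m)
        · rw [hj'] at ha
          refine ⟨by simp [hg, hj'], ?_⟩
          simp only [hg, hj', Sum.elim_inr, id]
          exact fun hmi => (madj_lr i m).1 ha hmi.symm
      refine card_aux i g (fun j hj => (hform j hj).2) ?_
      intro j1 hj1 j2 hj2 hgg
      have huu : u j1 = u j2 := by
        rw [(hform j1 hj1).1, (hform j2 hj2).1, hgg]
      have e1 := hcol j1 hj1
      rw [huu, hcol j2 hj2] at e1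
      omega
    · have hform : ∀ j ∈ Finset.Icc 1 (k-1), u j = Sum.inl (g j) ∧ g j ≠ i := by
        intro j hj
        have ha := hadj j hj
        rw [huk] at ha
        rcases hj' : u j with m | m
        · rw [hj'] at ha
          refine ⟨by simp [hg, hj'], ?_⟩
          simp only [hg, hj', Sum.elim_inl, id]
          exact fun hmi => (madj_rl m i).1 ha hmi
        · rw [hj'] at ha; exact absurd ha (madj_rr i m)
      refine card_aux i g (fun j hj => (hform j hj).2) ?_
      intro j1 hj1 j2 hj2 hgg
      have huu : u j1 = u j2 := by
        rw [(hform j1 hj1).1, (hform j2 hj2).1, hgg]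
      have e1 := hcol j1 hj1
      rw [huu, hcol j2 hj2] at e1
      omega
  omega
lemma zcol_mem {t : ℕ} (ht : 1 ≤ t) :
    ∃ c : (Fin t ⊕ Fin t) → ℕ, IsZColoring (Mgraph t) t c := by
  classical
  set c : (Fin t ⊕ Fin t) → ℕ :=
    Sum.elim (fun i : Fin t => (i : ℕ) + 1) (fun i : Fin t => (i : ℕ) + 1) with hc
  have hmem : ∀ v, c v ∈ Finset.Icc 1 t := by
    rintro (i | i) <;> simp [hc, Finset.mem_Icc] <;> omega
  have hsurj : ∀ i ∈ Finset.Icc 1 t, ∃ v, c v = i := by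
    intro i hi
    rw [Finset.mem_Icc] at hi
    exact ⟨Sum.inl ⟨i - 1, by omega⟩, by simp [hc]; omega⟩
  have hproper : IsProperColoring (Mgraph t) t c := by
    refine ⟨hmem, ?_, hsurj⟩
    rintro (a | a) (b | b) hab
    · exact absurd hab (madj_ll a b)
    · have := (madj_lr a b).1 hab
      simp only [hc, Sum.elim_inl, Sum.elim_inr]
      intro h
      exact this (Fin.ext (by omega))
    · have := (madj_rl b a).1 hab
      simp only [hc, Sum.elim_inl, Sum.elim_inr]
      intro h
      exact this (Fin.ext (by omega))
    · exact absurd hab (madj_rr a b)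
  have hCD : ∀ v, IsCDVertex (Mgraph t) t c v := by
    rintro (a | a) j hj hjne <;> rw [Finset.mem_Icc] at hj <;>
      simp only [hc, Sum.elim_inl, Sum.elim_inr] at hjne
    · refine ⟨Sum.inr ⟨j - 1, by omega⟩, ?_, by simp [hc]; omega⟩
      rw [madj_lr]
      intro h
      simp [Fin.ext_iff] at h
      omega
    · refine ⟨Sum.inl ⟨j - 1, by omega⟩, ?_, by simp [hc]; omega⟩
      rw [madj_rl]
      intro h
      simp [Fin.ext_iff] at h
      omega
  have hgrundy : IsGrundyColoring (Mgraph t) t c := by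
    refine ⟨hproper, ?_⟩
    intro v i hi hlt
    rw [Finset.mem_Icc] at hi
    exact hCD v i (Finset.mem_Icc.2 hi) (by omega)
  refine ⟨c, hgrundy, ⟨hproper, ?_⟩, ?_⟩
  · intro i hi
    obtain ⟨v, hv⟩ := hsurj i hi
    exact ⟨v, hv, hCD v⟩
  · refine ⟨fun j => if j = t then Sum.inl ⟨t - 1, by omega⟩
      else Sum.inr ⟨(j - 1) % t, Nat.mod_lt _ (by omega)⟩, ?_, ?_⟩
    · intro j hj
      rw [Finset.mem_Icc] at hj
      by_cases hjt : j = t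
      · subst hjt
        refine ⟨?_, hCD _⟩
        simp [hc]
        omega
      · refine ⟨?_, by simp only [if_neg hjt]; exact hCD _⟩
        simp only [if_neg hjt, hc, Sum.elim_inr]
        have : (j - 1) % t = j - 1 := Nat.mod_eq_of_lt (by omega)
        rw [this]
        omega
    · intro j hj hjt
      rw [Finset.mem_Icc] at hj
      simp only [if_true, if_neg hjt]
      rw [madj_lr]
      intro h
      have h2 : (t - 1 : ℕ) = (j - 1) % t := congrArg Fin.val h
      rw [Nat.mod_eq_of_lt (by omega)] at h2
      omega

theorem statement_9' (t : ℕ) (ht : 1 ≤ t) : zNumber (Mgraph t) = t := by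
  have hmem : t ∈ {k | ∃ c : (Fin t ⊕ Fin t) → ℕ, IsZColoring (Mgraph t) k c} :=
    zcol_mem ht
  have hbdd : ∀ k ∈ {k | ∃ c : (Fin t ⊕ Fin t) → ℕ, IsZColoring (Mgraph t) k c}, k ≤ t := by
    rintro k ⟨c, hc⟩
    exact zcol_le ht c hc
  refine le_antisymm (csSup_le ⟨t, hmem⟩ hbdd) (le_csSup ⟨t, hbdd⟩ hmem)
/-- For every `t ≥ 1`, `z(K_{t,t} \ tK_2) = t`. -/
theorem statement_9 (t : ℕ) (ht : 1 ≤ t) : zNumber (Mgraph t) = t :=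
  statement_9' t ht
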